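/- For integers m ≥ n ≥ 0, the n+1 rectangular monomials 𝖾^k𝗇^m𝖾^{n−k} (0 ≤ k ≤ n) are linearly independent over ℂ(q) in the path algebra 𝒫, and their span equals 𝒫_{m,n}; that is, they form a basis of 𝒫_{m,n}. -/

import Mathlib

noncomputable section

/-- The base field `F = ℂ(q)`. -/
abbrev F : Type := RatFunc ℂ

/-- The indeterminate `q`. -/
def qq : F := RatFunc.X

/-- The `q`-integer `[j]_q = 1 + q + ⋯ + q^(j-1)`. -/
def qint (j : ℕ) : F := ∑ i ∈ Finset.range j, qq ^ i

/-- The `q`-factorial `[j]_q! = [1]_q ⋯ [j]_q`. -/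
def qfact (j : ℕ) : F := ∏ i ∈ Finset.range j, qint (i + 1)

/-- Modular relations defining the path algebra `𝒫`; the letter `true` is `𝗇`,
the letter `false` is `𝖾`. -/
inductive PathRel : FreeAlgebra F Bool → FreeAlgebra F Bool → Prop where
  | mod1 : PathRel
      ((1 + qq) • (FreeAlgebra.ι F false * FreeAlgebra.ι F true * FreeAlgebra.ι F false))
      (qq • (FreeAlgebra.ι F false * FreeAlgebra.ι F false * FreeAlgebra.ι F true) +
        FreeAlgebra.ι F true * FreeAlgebra.ι F false * FreeAlgebra.ι F false)
  | mod2 : PathRel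
      ((1 + qq) • (FreeAlgebra.ι F true * FreeAlgebra.ι F false * FreeAlgebra.ι F true))
      (qq • (FreeAlgebra.ι F false * FreeAlgebra.ι F true * FreeAlgebra.ι F true) +
        FreeAlgebra.ι F true * FreeAlgebra.ι F true * FreeAlgebra.ι F false)

/-- The path algebra `𝒫`. -/
abbrev PathAlg : Type := RingQuot PathRel

/-- The generator `𝗇` of `𝒫`. -/
def Pn : PathAlg := RingQuot.mkAlgHom F PathRel (FreeAlgebra.ι F true)

/-- The generator `𝖾` of `𝒫`. -/
def Pe : PathAlg := RingQuot.mkAlgHom F PathRel (FreeAlgebra.ι F false)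

/-- The element of `𝒫` determined by a word in `𝗇` (`true`) and `𝖾` (`false`). -/
def wordElem (w : List Bool) : PathAlg := (w.map fun b => if b then Pn else Pe).prod

/-- `𝒫_{m,n}`: the span of words with `m` letters `𝗇` and `n` letters `𝖾`. -/
def Pmn (m n : ℕ) : Submodule F PathAlg :=
  Submodule.span F {x | ∃ w : List Bool, w.count true = m ∧ w.count false = n ∧ x = wordElem w}

/-- `lam` (0-indexed list of parts) is a partition contained in the `m × n` box. -/
def IsPartitionIn (m n : ℕ) (lam : ℕ → ℕ) : Prop :=
  (∀ i j, i ≤ j → lam j ≤ lam i) ∧ (∀ i, lam i ≤ n) ∧ (∀ i, m ≤ i → lam i = 0)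

/-- `eastBefore w r` = number of east steps (`false`) preceding the `(r+1)`-st
north step (`true`) of `w`. -/
def eastBefore : List Bool → ℕ → ℕ
  | [], _ => 0
  | true :: _, 0 => 0
  | true :: w, r + 1 => eastBefore w r
  | false :: w, r => eastBefore w r + 1

/-- `northBefore w r` = number of north steps (`true`) preceding the `(r+1)`-st
east step (`false`) of `w`. -/
def northBefore : List Bool → ℕ → ℕ
  | [], _ => 0
  | false :: _, 0 => 0
  | false :: w, r + 1 => northBefore w r
  | true :: w, r => northBefore w r + 1

/-- The partition `λ(w)` of a word with `m` letters `𝗇`, as a 0-indexed function: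
row `i` (from the top) of the partition has `eastBefore w (m-1-i)` cells. -/
def wordLam (m : ℕ) (w : List Bool) : ℕ → ℕ :=
  fun i => if i < m then eastBefore w (m - 1 - i) else 0

/-- The word `w(λ)` of a partition `λ ⊆ m × n` (given as 0-indexed `lam : ℕ → ℕ`). -/
def wordOf (m n : ℕ) (lam : ℕ → ℕ) : List Bool :=
  ((List.range m).flatMap fun k =>
    List.replicate (lam (m - 1 - k) - lam (m - k)) false ++ [true]) ++
    List.replicate (n - lam 0) false

/-- The rook in column `j` of the placement `ρ` lies inside the Ferrers board of `lam`. -/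
def rookInside (m n : ℕ) (lam : ℕ → ℕ) (ρ : Fin n ↪ Fin m) (j : Fin n) : Prop :=
  (j : ℕ) < lam (ρ j)

/-- The cell in row `i` (0-indexed from the top) and column `j` (0-indexed from the left)
is unattacked for the maximal non-attacking rook placement `ρ` (with the Ferrers board of
`lam` drawn in the top-left corner of the `m × n` board). -/
def Unattacked (m n : ℕ) (lam : ℕ → ℕ) (ρ : Fin n ↪ Fin m) (i : Fin m) (j : Fin n) : Prop :=
  ρ j ≠ i ∧ ¬ ((ρ j : ℕ) < (i : ℕ)) ∧
    (if (j : ℕ) < lam i then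
      (∀ j' : Fin n, ρ j' = i → ¬ (j' < j)) ∧
      (∀ j' : Fin n, ρ j' = i → j < j' → (j' : ℕ) < lam i)
    else
      ∀ j' : Fin n, ρ j' = i → j' < j → (j' : ℕ) < lam i)

/-- `stat ρ` = number of unattacked cells. -/
def statRook (m n : ℕ) (lam : ℕ → ℕ) (ρ : Fin n ↪ Fin m) : ℕ :=
  Set.ncard {p : Fin m × Fin n | Unattacked m n lam ρ p.1 p.2}

/-- The `q`-hit number `H_k^{m,n}(λ)`. -/
def qHit (m n : ℕ) (lam : ℕ → ℕ) (k : ℕ) : F :=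
  ∑ ρ : Fin n ↪ Fin m,
    if Set.ncard {j : Fin n | rookInside m n lam ρ j} = k then qq ^ statRook m n lam ρ else 0

/-- A Dyck word of size `N`. -/
def IsDyck (N : ℕ) (w : List Bool) : Prop :=
  w.count true = N ∧ w.count false = N ∧
    ∀ p : ℕ, (w.take p).count false ≤ (w.take p).count true

/-- Adjacency of the Dyck graph `G(D)` of a Dyck word of size `N` on vertices `Fin N`
(0-indexed: vertex `a` is the vertex `a+1` of `{1,…,N}`). -/
def dyckAdj (N : ℕ) (w : List Bool) (a b : Fin N) : Prop :=
  ((a : ℕ) < b ∧ (b : ℕ) < northBefore w a) ∨ ((b : ℕ) < a ∧ (a : ℕ) < northBefore w b)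

/-- Proper colorings of the Dyck graph `G(w)` with `ν` colors. -/
def properColorings (N ν : ℕ) (w : List Bool) : Set (Fin N → Fin ν) :=
  {κ | ∀ a b : Fin N, dyckAdj N w a b → κ a ≠ κ b}

/-- Number of ascents of a coloring. -/
def ascColor (N ν : ℕ) (w : List Bool) (κ : Fin N → Fin ν) : ℕ :=
  Set.ncard {p : Fin N × Fin N | (p.1 : ℕ) < p.2 ∧ dyckAdj N w p.1 p.2 ∧ κ p.1 < κ p.2}

open scoped Classical in
/-- The chromatic quasisymmetric polynomial `X_{G(w)}(x_1,…,x_ν; q)`. -/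
def chromX (N ν : ℕ) (w : List Bool) : MvPolynomial (Fin ν) F :=
  ∑ κ : Fin N → Fin ν,
    if κ ∈ properColorings N ν w then
      MvPolynomial.C (qq ^ ascColor N ν w κ) * ∏ a : Fin N, MvPolynomial.X (κ a)
    else 0

/-- The staircase word `δ_k = 𝖾^{n-k}(𝗇𝖾)^k𝗇^{m-k}`. -/
def deltaWord (m n k : ℕ) : List Bool :=
  List.replicate (n - k) false ++ (List.replicate k [true, false]).flatten ++
    List.replicate (m - k) true

/-- `m_w`: the largest `k` with `λ(w) ⊆ λ(δ_k)`, i.e. such that the path of `δ_k`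
lies weakly below the path of `w`. -/
def mw (m n : ℕ) (w : List Bool) : ℕ :=
  Finset.sup ((Finset.range (min m n + 1)).filter fun k =>
    ∀ i ∈ Finset.range m, wordLam m w i ≤ wordLam m (deltaWord m n k) i) id

/-- The lattice paths of `w` and `d` share the unit step of `w` corresponding to
the letter at (0-indexed) position `p` of `w`. -/
def StepShared (w d : List Bool) (p : ℕ) : Prop :=
  ∃ p' : ℕ, p' < d.length ∧ d[p']? = w[p]? ∧
    (d.take p').count true = (w.take p).count true ∧
    (d.take p').count false = (w.take p).count false

/-- `w` possesses a critical factor: a factor `𝗇^i𝖾` or `𝗇𝖾^i` with `i ≥ 2`, whose run of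
repeated letters is maximal within `w`, and whose letters contain a unit step shared by
the lattice paths of `w` and of `δ_{m_w}`. -/
def HasCriticalFactor (m n : ℕ) (w : List Bool) : Prop :=
  ∃ (x y : List Bool) (i : ℕ), 2 ≤ i ∧
    ((w = x ++ (List.replicate i true ++ [false]) ++ y ∧ x.getLast? ≠ some true ∧
        ∃ p, x.length ≤ p ∧ p < x.length + i + 1 ∧ StepShared w (deltaWord m n (mw m n w)) p) ∨
      (w = x ++ ([true] ++ List.replicate i false) ++ y ∧ y.head? ≠ some false ∧
        ∃ p, x.length ≤ p ∧ p < x.length + i + 1 ∧ StepShared w (deltaWord m n (mw m n w)) p))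

/-- Evaluation of a (commutative) polynomial in two variables at the commuting elements
`s`, `t` of `𝒫`. -/
def evalST (s t : PathAlg) (P : MvPolynomial (Fin 2) F) : PathAlg :=
  ∑ d ∈ P.support, P.coeff d • (s ^ (d 0) * t ^ (d 1))

/-- The conjugate partition: `conjP m lam i = λ'_i = #{rows r : λ_r ≥ i}` (here `i ≥ 1`,
rows 0-indexed, `lam` supported on `[0, m)`). -/
def conjP (m : ℕ) (lam : ℕ → ℕ) (i : ℕ) : ℕ :=
  ((Finset.range m).filter fun r => i ≤ lam r).card

/-- The sequence `b(λ) = (b_1,…,b_n)` (1-indexed `i`) for `λ ⊆ m × n`, `m ≥ n`. -/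
def bSeq (m : ℕ) (lam : ℕ → ℕ) (i : ℕ) : ℤ :=
  if lam (m - i) < i then (m : ℤ) + 1 - i - conjP m lam i else (i : ℤ) - lam (m - i)

/-- The element `wt_i ∈ 𝒫`. -/
def wt (i : ℤ) : PathAlg :=
  if 1 ≤ i then qint i.toNat • (Pn * Pe) - (qq * qint (i - 1).toNat) • (Pe * Pn)
  else (qq ^ i) • (qint (1 - i).toNat • (Pe * Pn) - qint (-i).toNat • (Pn * Pe))

/-- The defining relations of the `q`-Klyachko algebra. -/
def klyRels : Set (MvPolynomial ℤ F) :=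
  {x | ∃ i : ℤ, x = MvPolynomial.C (1 + qq) * (MvPolynomial.X i * MvPolynomial.X i) -
    (MvPolynomial.C qq * (MvPolynomial.X i * MvPolynomial.X (i - 1)) +
      MvPolynomial.X i * MvPolynomial.X (i + 1))}

/-- The `q`-Klyachko algebra `𝒦`. -/
abbrev Kly : Type := MvPolynomial ℤ F ⧸ Ideal.span klyRels

/-- The generator `u_i` of `𝒦`. -/
def uK (i : ℤ) : Kly := Ideal.Quotient.mk (Ideal.span klyRels) (MvPolynomial.X i)

/-- The element `u(λ) = u_{a_1} ⋯ u_{a_m}` of `𝒦`, where `a(λ)` is the area sequence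
of `λ ⊆ m × m` (here `a_{i+1} = (i+1) - λ_{m-i}` with `lam` 0-indexed). -/
def uLam (m : ℕ) (lam : ℕ → ℕ) : Kly :=
  ∏ i ∈ Finset.range m, uK ((i : ℤ) + 1 - lam (m - 1 - i))

/-- The partition `λ(G(D))` of a Dyck word of size `N`, 0-indexed:
`λ_{i+1} = N - h_{i+1}(D)`. -/
def lamG (N : ℕ) (D : List Bool) : ℕ → ℕ :=
  fun i => if i < N then N - northBefore D i else 0

/-- The number of nonzero parts of `λ(G(D))`. -/
def ellG (N : ℕ) (D : List Bool) : ℕ :=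
  ((Finset.range N).filter fun i => N - northBefore D i ≠ 0).card

/-- The Dyck graph `G(D)` is abelian. -/
def IsAbelian (N : ℕ) (D : List Bool) : Prop := lamG N D 0 + ellG N D ≤ N

/-- `r` is an acyclic orientation of the graph with adjacency `adj` on `Fin N`. -/
def IsAcyclicOrientation (N : ℕ) (adj : Fin N → Fin N → Prop)
    (r : Fin N → Fin N → Bool) : Prop :=
  (∀ a b, r a b = true → adj a b) ∧
  (∀ a b, adj a b → (r a b = true ↔ ¬ r b a = true)) ∧
  (∀ a, ¬ Relation.TransGen (fun u v => r u v = true) a a)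

/-- Number of ascents of an orientation. -/
def ascOrient (N : ℕ) (r : Fin N → Fin N → Bool) : ℕ :=
  Set.ncard {p : Fin N × Fin N | r p.1 p.2 = true ∧ (p.1 : ℕ) < p.2}

/-- Remove from `S` the sources of the orientation restricted to `S`. -/
def peel (N : ℕ) (r : Fin N → Fin N → Bool) (S : Set (Fin N)) : Set (Fin N) :=
  {v ∈ S | ∃ u ∈ S, r u v = true}

/-- Number of sources of the orientation restricted to `S`. -/
def numSources (N : ℕ) (r : Fin N → Fin N → Bool) (S : Set (Fin N)) : ℕ :=
  Set.ncard {v ∈ S | ∀ u ∈ S, ¬ r u v = true}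

open scoped Classical in
/-- `initial(A)`: the number of leading entries of the source sequence equal to `2`. -/
def initialA (N : ℕ) (r : Fin N → Fin N → Bool) : ℕ :=
  Finset.sup ((Finset.range (N + 1)).filter fun j =>
    ∀ k < j, numSources N r ((peel N r)^[k] Set.univ) = 2) id

end

/-!
The relation for `𝗇𝖾𝗇` says that `z a = 𝗇^a 𝖾 𝗇^(N-a)` satisfies
`(1 + q) z (a+1) = q z a + z (a+2)`, whose solutions are `z a = z 0 + [a]_q (z 1 - z 0)`.
Since `[a]_q ≠ 0`, this writes `𝗇𝖾𝗇^b` in terms of `𝖾𝗇^(b+1)` and `𝗇^(b+1)𝖾`, and the mirror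
relation for `𝖾𝗇𝖾` moves an `𝗇` to the left across a block of `𝖾`s in the same way. So left
multiplication by either generator maps rectangular monomials into the span of rectangular
monomials, and every word lies in that span.

For independence, `𝒫` acts on `F[ℤ]` (basis `e_j`) by `𝗇 e_j = e_{j+1}` and
`𝖾 e_j = (1 - q^{-j}) e_{j-1}`: both defining relations reduce to the same recurrence for
`j ↦ 1 - q^{-j}`. The monomial `𝖾^b 𝗇^m 𝖾^(n-b)` maps `e_j` to a multiple of `e_{j+m-n}`, and for
`j = n - m - k - 1` that multiple vanishes exactly when `k < b`. The matrix of these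
coefficients is therefore triangular with nonzero diagonal.
-/

theorem qq_ne_zero : qq ≠ 0 := RatFunc.X_ne_zero

theorem qq_pow_ne_one {t : ℕ} (ht : t ≠ 0) : qq ^ t ≠ 1 := by
  rw [qq, ← RatFunc.algebraMap_X, ← map_pow, ← map_one (algebraMap (Polynomial ℂ) F),
    (RatFunc.algebraMap_injective ℂ).ne_iff]
  intro h
  simpa [ht] using congrArg Polynomial.natDegree h

theorem qq_zpow_eq_one_iff {j : ℤ} : qq ^ j = 1 ↔ j = 0 := by
  refine ⟨fun h => ?_, fun h => by rw [h, zpow_zero]⟩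
  obtain ⟨t, rfl | rfl⟩ := j.eq_nat_or_neg <;> by_contra ht <;>
    exact qq_pow_ne_one (t := t) (by omega) (by simpa using h)

theorem qint_succ_ne_zero (t : ℕ) : qint (t + 1) ≠ 0 := by
  have : qint (t + 1) =
      algebraMap (Polynomial ℂ) F (∑ i ∈ Finset.range (t + 1), Polynomial.X ^ i) := by
    simp [qint, qq, map_sum]
  rw [this, map_ne_zero_iff _ (RatFunc.algebraMap_injective ℂ)]
  intro h
  simpa [Polynomial.eval_finsetSum, Finset.sum_range_succ'] using
    congrArg (Polynomial.eval 0) h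

theorem qRecurrence_solution {R M : Type*} [CommRing R] [AddCommGroup M] [Module R M] (q : R)
    (Z : ℕ → ℕ → M)
    (hZ : ∀ a b, (1 + q) • Z (a + 1) (b + 1) = q • Z a (b + 2) + Z (a + 2) b) (a b : ℕ) :
    Z (a + 1) b =
      Z 0 (a + b + 1) + (∑ i ∈ Finset.range (a + 1), q ^ i) • (Z 1 (a + b) - Z 0 (a + b + 1)) := by
  induction a using Nat.twoStepInduction generalizing b with
  | zero => simp
  | one =>
    have hrec := hZ 0 b
    rw [show 1 + b + 1 = b + 2 by omega, add_comm 1 b]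
    simp only [Finset.sum_range_succ, Finset.sum_range_zero]
    linear_combination (norm := module) -hrec
  | more a ih₀ ih₁ =>
    have hrec := hZ (a + 1) b
    have h₀ := ih₀ (b + 2)
    have h₁ := ih₁ (b + 1)
    rw [show a + 1 + 2 = a + 2 + 1 by omega] at hrec
    rw [show a + (b + 2) = a + 2 + b by omega] at h₀
    rw [show a + 1 + (b + 1) = a + 2 + b by omega] at h₁
    have hq : ∑ i ∈ Finset.range (a + 2 + 1), q ^ i =
        (1 + q) * ∑ i ∈ Finset.range (a + 1 + 1), q ^ i -
          q * ∑ i ∈ Finset.range (a + 1), q ^ i := by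
      simp only [Finset.sum_range_succ]
      ring
    rw [hq]
    linear_combination (norm := module) -hrec + (1 + q) • h₁ - q • h₀

theorem Pe_mul_Pn_mul_Pe : (1 + qq) • (Pe * Pn * Pe) = qq • (Pe * Pe * Pn) + Pn * Pe * Pe := by
  simpa only [map_smul, map_add, map_mul, Pe, Pn] using RingQuot.mkAlgHom_rel F PathRel.mod1

theorem Pn_mul_Pe_mul_Pn : (1 + qq) • (Pn * Pe * Pn) = qq • (Pe * Pn * Pn) + Pn * Pn * Pe := by
  simpa only [map_smul, map_add, map_mul, Pe, Pn] using RingQuot.mkAlgHom_rel F PathRel.mod2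

theorem Pn_pow_mul_Pe_mul_Pn_pow_recurrence (a b : ℕ) :
    (1 + qq) • (Pn ^ (a + 1) * Pe * Pn ^ (b + 1)) =
      qq • (Pn ^ a * Pe * Pn ^ (b + 2)) + Pn ^ (a + 2) * Pe * Pn ^ b := by
  calc (1 + qq) • (Pn ^ (a + 1) * Pe * Pn ^ (b + 1))
      = Pn ^ a * ((1 + qq) • (Pn * Pe * Pn)) * Pn ^ b := by
        rw [pow_succ Pn a, pow_succ' Pn b]
        simp only [mul_smul_comm, smul_mul_assoc, mul_assoc]
    _ = Pn ^ a * (qq • (Pe * Pn * Pn) + Pn * Pn * Pe) * Pn ^ b := by rw [Pn_mul_Pe_mul_Pn]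
    _ = qq • (Pn ^ a * Pe * Pn ^ (b + 2)) + Pn ^ (a + 2) * Pe * Pn ^ b := by
        rw [pow_succ Pn (a + 1), pow_succ Pn a, pow_succ' Pn (b + 1), pow_succ' Pn b]
        simp only [mul_add, add_mul, mul_smul_comm, smul_mul_assoc, mul_assoc]

theorem Pe_pow_mul_Pn_mul_Pe_pow_recurrence (v : PathAlg) (a b : ℕ) :
    (1 + qq) • (Pe ^ (b + 1) * Pn * Pe ^ (a + 1) * v) =
      qq • (Pe ^ (b + 2) * Pn * Pe ^ a * v) + Pe ^ b * Pn * Pe ^ (a + 2) * v := by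
  calc (1 + qq) • (Pe ^ (b + 1) * Pn * Pe ^ (a + 1) * v)
      = Pe ^ b * ((1 + qq) • (Pe * Pn * Pe)) * (Pe ^ a * v) := by
        rw [pow_succ Pe b, pow_succ' Pe a]
        simp only [mul_smul_comm, smul_mul_assoc, mul_assoc]
    _ = Pe ^ b * (qq • (Pe * Pe * Pn) + Pn * Pe * Pe) * (Pe ^ a * v) := by rw [Pe_mul_Pn_mul_Pe]
    _ = qq • (Pe ^ (b + 2) * Pn * Pe ^ a * v) + Pe ^ b * Pn * Pe ^ (a + 2) * v := by
        rw [pow_succ Pe (b + 1), pow_succ Pe b, pow_succ' Pe (a + 1), pow_succ' Pe a]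
        simp only [mul_add, add_mul, mul_smul_comm, smul_mul_assoc, mul_assoc]

open Submodule

theorem mul_mem_span_pair {R A : Type*} [CommSemiring R] [Semiring A] [Algebra R A] {x y z : A}
    (h : x ∈ span R {y, z}) (u v : A) : u * x * v ∈ span R {u * y * v, u * z * v} := by
  simpa only [Set.image_pair, LinearMap.comp_apply, LinearMap.mulLeft_apply,
    LinearMap.mulRight_apply, mul_assoc] using
    apply_mem_span_image_of_mem_span (LinearMap.mulLeft R u ∘ₗ LinearMap.mulRight R v) h

theorem Pn_mul_Pe_mul_Pn_pow_mem_span (b : ℕ) :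
    Pn * Pe * Pn ^ b ∈ span F {Pe * Pn ^ (b + 1), Pn ^ (b + 1) * Pe} := by
  have h : Pn ^ (b + 1) * Pe =
      Pe * Pn ^ (b + 1) + qint (b + 1) • (Pn * Pe * Pn ^ b - Pe * Pn ^ (b + 1)) := by
    simpa [qint] using qRecurrence_solution qq (fun a b => Pn ^ a * Pe * Pn ^ b)
      Pn_pow_mul_Pe_mul_Pn_pow_recurrence b 0
  refine mem_span_pair.2 ⟨1 - (qint (b + 1))⁻¹, (qint (b + 1))⁻¹, ?_⟩
  rw [h, smul_add, smul_smul, inv_mul_cancel₀ (qint_succ_ne_zero b), one_smul, sub_smul, one_smul]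
  abel

theorem Pn_mul_Pe_pow_mul_Pn_pow_mem_span (j m : ℕ) :
    Pn * Pe ^ (j + 1) * Pn ^ m ∈
      span F {Pe ^ (j + 1) * Pn ^ (m + 1), Pe ^ j * Pn ^ (m + 1) * Pe} := by
  have h : Pn * Pe ^ (j + 1) * Pn ^ m = Pe ^ (j + 1) * Pn * Pn ^ m +
      qint (j + 1) • (Pe ^ j * Pn * Pe * Pn ^ m - Pe ^ (j + 1) * Pn * Pn ^ m) := by
    simpa [qint] using qRecurrence_solution qq (fun a b => Pe ^ b * Pn * Pe ^ a * Pn ^ m)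
      (Pe_pow_mul_Pn_mul_Pe_pow_recurrence (Pn ^ m)) j 0
  have hfirst : Pe ^ (j + 1) * Pn * Pn ^ m = Pe ^ (j + 1) * Pn ^ (m + 1) := by
    rw [mul_assoc, ← pow_succ']
  have hsecond : Pe ^ j * Pn * Pe * Pn ^ m ∈
      span F {Pe ^ (j + 1) * Pn ^ (m + 1), Pe ^ j * Pn ^ (m + 1) * Pe} := by
    have := mul_mem_span_pair (Pn_mul_Pe_mul_Pn_pow_mem_span m) (Pe ^ j) 1
    simpa only [mul_one, mul_assoc, pow_succ] using this
  rw [h, hfirst]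
  exact add_mem (subset_span (by simp)) (smul_mem _ _ (sub_mem hsecond (subset_span (by simp))))

noncomputable def rectMonomial (m n k : ℕ) : PathAlg := Pe ^ k * Pn ^ m * Pe ^ (n - k)

noncomputable def rectSpan (m n : ℕ) : Submodule F PathAlg :=
  span F (Set.range fun k : Fin (n + 1) => rectMonomial m n k)

theorem rectMonomial_mem_rectSpan {m n k : ℕ} (hk : k ≤ n) : rectMonomial m n k ∈ rectSpan m n :=
  subset_span ⟨⟨k, Nat.lt_succ_of_le hk⟩, rfl⟩

theorem Pe_mul_mem_rectSpan {m n : ℕ} {x : PathAlg} (hx : x ∈ rectSpan m n) :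
    Pe * x ∈ rectSpan m (n + 1) := by
  refine (span_le.2 ?_ : rectSpan m n ≤ (rectSpan m (n + 1)).comap (LinearMap.mulLeft F Pe)) hx
  rintro _ ⟨⟨k, hk⟩, rfl⟩
  show Pe * rectMonomial m n k ∈ rectSpan m (n + 1)
  rw [show Pe * rectMonomial m n k = rectMonomial m (n + 1) (k + 1) by
    simp only [rectMonomial, Nat.add_sub_add_right, pow_succ', mul_assoc]]
  exact rectMonomial_mem_rectSpan (by omega)

theorem Pn_mul_mem_rectSpan {m n : ℕ} {x : PathAlg} (hx : x ∈ rectSpan m n) :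
    Pn * x ∈ rectSpan (m + 1) n := by
  refine (span_le.2 ?_ : rectSpan m n ≤ (rectSpan (m + 1) n).comap (LinearMap.mulLeft F Pn)) hx
  rintro _ ⟨⟨k, hk⟩, rfl⟩
  show Pn * rectMonomial m n k ∈ rectSpan (m + 1) n
  obtain _ | j := k
  · rw [show Pn * rectMonomial m n 0 = rectMonomial (m + 1) n 0 by
      simp only [rectMonomial, pow_zero, one_mul, pow_succ', mul_assoc, Nat.sub_zero]]
    exact rectMonomial_mem_rectSpan (Nat.zero_le n)
  · have h := mul_mem_span_pair (Pn_mul_Pe_pow_mul_Pn_pow_mem_span j m) 1 (Pe ^ (n - (j + 1)))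
    have hj : Pe ^ j * Pn ^ (m + 1) * Pe * Pe ^ (n - (j + 1)) = rectMonomial (m + 1) n j := by
      rw [rectMonomial, mul_assoc, ← pow_succ', show n - (j + 1) + 1 = n - j by omega]
    simp only [one_mul, hj] at h
    rw [show Pn * rectMonomial m n (j + 1) = Pn * Pe ^ (j + 1) * Pn ^ m * Pe ^ (n - (j + 1)) by
      simp only [rectMonomial, mul_assoc]]
    refine span_le.2 ?_ h
    rintro _ (rfl | rfl)
    · exact rectMonomial_mem_rectSpan (by omega)
    · exact rectMonomial_mem_rectSpan (by omega)

theorem wordElem_mem_rectSpan (w : List Bool) :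
    wordElem w ∈ rectSpan (w.count true) (w.count false) := by
  induction w with
  | nil => simpa [rectMonomial, wordElem] using rectMonomial_mem_rectSpan (m := 0) (n := 0) le_rfl
  | cons b w ih =>
    have hcons : wordElem (b :: w) = (if b then Pn else Pe) * wordElem w := by
      simp [wordElem]
    cases b
    · simpa [hcons] using Pe_mul_mem_rectSpan ih
    · simpa [hcons] using Pn_mul_mem_rectSpan ih

theorem rectMonomial_eq_wordElem (m n k : ℕ) :
    rectMonomial m n k = wordElem (List.replicate k false ++ List.replicate m true ++
      List.replicate (n - k) false) := by
  simp [rectMonomial, wordElem, List.map_replicate, mul_assoc]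

theorem rectSpan_eq_Pmn (m n : ℕ) : rectSpan m n = Pmn m n := by
  apply le_antisymm
  · refine span_le.2 ?_
    rintro _ ⟨⟨k, hk⟩, rfl⟩
    refine subset_span ⟨_, ?_, ?_, rectMonomial_eq_wordElem m n k⟩
    · simp [List.count_replicate]
    · simpa [List.count_replicate] using Nat.add_sub_of_le (Nat.le_of_lt_succ hk)
  · refine span_le.2 ?_
    rintro _ ⟨w, rfl, rfl, rfl⟩
    exact wordElem_mem_rectSpan w

noncomputable def downCoeff (i : ℤ) : F := 1 - qq ^ (-i)

theorem downCoeff_eq_zero_iff {i : ℤ} : downCoeff i = 0 ↔ i = 0 := by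
  rw [downCoeff, sub_eq_zero, eq_comm, qq_zpow_eq_one_iff, neg_eq_zero]

theorem downCoeff_recurrence (j : ℤ) :
    (1 + qq) * downCoeff j = qq * downCoeff (j + 1) + downCoeff (j - 1) := by
  have hj : qq ^ (-(j - 1)) = qq * qq ^ (-j) := by
    rw [neg_sub, sub_eq_neg_add, zpow_add₀ qq_ne_zero, zpow_one, mul_comm]
  have hj' : qq * qq ^ (-(j + 1)) = qq ^ (-j) := by
    rw [neg_add, zpow_add₀ qq_ne_zero, zpow_neg_one, mul_left_comm, mul_inv_cancel₀ qq_ne_zero,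
      mul_one]
  simp only [downCoeff, mul_sub, hj, hj']
  ring

noncomputable def shiftUp : Module.End F (ℤ →₀ F) := Finsupp.lmapDomain F F (· + 1)

noncomputable def weightedShiftDown : Module.End F (ℤ →₀ F) :=
  Finsupp.lsum F fun i => downCoeff i • Finsupp.lsingle (i - 1)

theorem shiftUp_single (j : ℤ) (a : F) : shiftUp (.single j a) = .single (j + 1) a :=
  Finsupp.mapDomain_single

theorem weightedShiftDown_single (j : ℤ) (a : F) :
    weightedShiftDown (.single j a) = downCoeff j • .single (j - 1) a := by
  simp [weightedShiftDown]

theorem weightedShiftDown_shiftUp_weightedShiftDown :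
    (1 + qq) • (weightedShiftDown * shiftUp * weightedShiftDown) =
      qq • (weightedShiftDown * weightedShiftDown * shiftUp) +
        shiftUp * weightedShiftDown * weightedShiftDown := by
  refine Finsupp.lhom_ext fun j a => ?_
  simp only [LinearMap.smul_apply, LinearMap.add_apply, Module.End.mul_apply, shiftUp_single,
    weightedShiftDown_single, map_smul, smul_smul, sub_add_cancel, add_sub_cancel_right]
  rw [← add_smul]
  congr 1
  linear_combination downCoeff j * downCoeff_recurrence j

theorem shiftUp_weightedShiftDown_shiftUp :
    (1 + qq) • (shiftUp * weightedShiftDown * shiftUp) =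
      qq • (weightedShiftDown * shiftUp * shiftUp) + shiftUp * shiftUp * weightedShiftDown := by
  refine Finsupp.lhom_ext fun j a => ?_
  simp only [LinearMap.smul_apply, LinearMap.add_apply, Module.End.mul_apply, shiftUp_single,
    weightedShiftDown_single, map_smul, smul_smul, sub_add_cancel, add_sub_cancel_right]
  rw [← add_smul]
  congr 1
  simpa only [add_sub_cancel_right] using downCoeff_recurrence (j + 1)

noncomputable def pathRep : PathAlg →ₐ[F] Module.End F (ℤ →₀ F) :=
  RingQuot.liftAlgHom F ⟨FreeAlgebra.lift F fun b => cond b shiftUp weightedShiftDown, by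
    rintro _ _ ⟨⟩
    · simpa using weightedShiftDown_shiftUp_weightedShiftDown
    · simpa using shiftUp_weightedShiftDown_shiftUp⟩

theorem pathRep_Pn : pathRep Pn = shiftUp := by
  simp [pathRep, Pn]

theorem pathRep_Pe : pathRep Pe = weightedShiftDown := by
  simp [pathRep, Pe]

theorem shiftUp_pow_single (b : ℕ) (j : ℤ) (a : F) :
    (shiftUp ^ b) (.single j a) = .single (j + b) a := by
  induction b generalizing j with
  | zero => simp
  | succ b ih =>
    rw [pow_succ, Module.End.mul_apply, shiftUp_single, ih]
    push_cast
    ring_nf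

noncomputable def downProd (j : ℤ) (k : ℕ) : F := ∏ t ∈ Finset.range k, downCoeff (j - t)

theorem downProd_eq_zero_iff {j : ℤ} {k : ℕ} : downProd j k = 0 ↔ 0 ≤ j ∧ j < k := by
  simp only [downProd, Finset.prod_eq_zero_iff, Finset.mem_range, downCoeff_eq_zero_iff,
    sub_eq_zero]
  constructor
  · rintro ⟨t, ht, rfl⟩
    exact ⟨by positivity, by exact_mod_cast ht⟩
  · rintro ⟨h₀, h₁⟩
    exact ⟨j.toNat, by omega, by omega⟩

theorem weightedShiftDown_pow_single (k : ℕ) (j : ℤ) (a : F) :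
    (weightedShiftDown ^ k) (.single j a) = downProd j k • .single (j - k) a := by
  induction k generalizing j with
  | zero => simp [downProd]
  | succ k ih =>
    rw [pow_succ, Module.End.mul_apply, weightedShiftDown_single, map_smul, ih, smul_smul,
      downProd, downProd, Finset.prod_range_succ', mul_comm]
    push_cast
    simp only [sub_sub, add_comm (1 : ℤ), sub_zero]

noncomputable def rectCoeff (m n b : ℕ) (j : ℤ) : F :=
  downProd (j - (n - b : ℕ) + m) b * downProd j (n - b)

theorem pathRep_rectMonomial_single (m n b : ℕ) (j : ℤ) (a : F) :
    pathRep (rectMonomial m n b) (.single j a) =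
      rectCoeff m n b j • .single (j - (n - b : ℕ) + m - b) a := by
  simp only [rectMonomial, map_mul, map_pow, pathRep_Pn, pathRep_Pe, Module.End.mul_apply,
    weightedShiftDown_pow_single, shiftUp_pow_single, map_smul, smul_smul, rectCoeff, mul_comm]

theorem rectCoeff_eq_zero_iff {m n b : ℕ} (hmn : n ≤ m) (hb : b ≤ n) (k : ℕ) :
    rectCoeff m n b (n - m - k - 1) = 0 ↔ k < b := by
  rw [rectCoeff, mul_eq_zero, downProd_eq_zero_iff, downProd_eq_zero_iff]
  push_cast [hb]
  omega

theorem linearIndependent_rectMonomial {m n : ℕ} (hmn : n ≤ m) :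
    LinearIndependent F (fun b : Fin (n + 1) => rectMonomial m n b) := by
  let j : Fin (n + 1) → ℤ := fun k => n - m - k - 1
  let A : Matrix (Fin (n + 1)) (Fin (n + 1)) F := .of fun b k => rectCoeff m n b (j k)
  have hA : A.det ≠ 0 := by
    rw [Matrix.det_of_isUpperTriangular (M := A) fun b k hkb =>
      (rectCoeff_eq_zero_iff hmn b.is_le k).2 hkb]
    exact Finset.prod_ne_zero_iff.2 fun b _ => by
      simp [A, j, rectCoeff_eq_zero_iff hmn b.is_le]
  let Φ : PathAlg →ₗ[F] Fin (n + 1) → F := LinearMap.pi fun k =>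
    Finsupp.lapply (j k + m - n) ∘ₗ LinearMap.applyₗ (.single (j k) 1) ∘ₗ pathRep.toLinearMap
  refine LinearIndependent.of_comp Φ ?_
  convert Matrix.linearIndependent_rows_of_det_ne_zero hA using 1
  · ext b k
    have hidx : j k - (n - b : ℕ) + m - b = j k + m - n := by
      rw [Nat.cast_sub b.is_le]
      ring
    simp [Φ, A, pathRep_rectMonomial_single, hidx]
  · rfl

/-- The rectangular monomials form a basis of `𝒫_{m,n}`. -/
theorem stmt13 (m n : ℕ) (hmn : n ≤ m) :
    LinearIndependent F
      (fun k : Fin (n + 1) => Pe ^ (k : ℕ) * Pn ^ m * Pe ^ (n - (k : ℕ))) ∧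
    Submodule.span F
      (Set.range fun k : Fin (n + 1) => Pe ^ (k : ℕ) * Pn ^ m * Pe ^ (n - (k : ℕ))) =
      Pmn m n :=
  ⟨linearIndependent_rectMonomial hmn, rectSpan_eq_Pmn m n⟩
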